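/- arXiv:2009.13571 — 6 statements merged into one kernel-verified Lean document; each statement's English description precedes it below -/
import Mathlib

section
/- Let Δ be a map on signals such that for every signal x in L²[0,∞), the image Δx is again a signal in L²[0,∞). Then the following are equivalent: (i) for all τ ∈ ℝ and all signals x in L²[0,∞), |∫₀^∞ x(t+τ)·(Δx)(t) dt| ≤ ∫₀^∞ x(t)·(Δx)(t) dt; (ii) for every z ∈ L¹(ℝ) with ‖z‖₁ ≤ 1 (no sign restriction on z), and every signal x in L²[0,∞), one has ⟨x, Δx − z∗(Δx)⟩ ≥ 0. -/
open MeasureTheory Set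

/-- A signal in L²[0,∞): square integrable over ℝ and vanishing on (−∞,0). -/
def IsSignal (x : ℝ → ℝ) : Prop :=
  MemLp x 2 volume ∧ ∀ t < (0:ℝ), x t = 0

/-- Convolution (z∗w)(t) = ∫ z(s)·w(t−s) ds. -/
noncomputable def conv (z w : ℝ → ℝ) : ℝ → ℝ := fun t => ∫ s, z s * w (t - s)

/-! With `y = Δ x`, which vanishes on `(-∞, 0)`, both integrals in (i) are values of the
cross-correlation `R τ = ∫ x (t + τ) * y t`, so (i) says `|R τ| ≤ R 0` for all `τ`.
By Fubini, `⟪x, z ∗ y⟫ = ∫ z * R`, so (ii) says `∫ z * R ≤ R 0` on the unit ball of `L¹`.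
The two agree because `R` is continuous (translation is continuous on `L²`), and the supremum
of `∫ z * R` over the unit ball of `L¹` is `sup |R|`, approached by normalised indicators of
shrinking intervals of either sign. -/

open Filter Topology

noncomputable def crossCorrelation (x y : ℝ → ℝ) (τ : ℝ) : ℝ := ∫ t, x (t + τ) * y t

section Correlation

variable {x y z : ℝ → ℝ}

lemma crossCorrelation_zero : crossCorrelation x y 0 = ∫ t, x t * y t := by
  simp [crossCorrelation]

lemma continuous_crossCorrelation (hx : MemLp x 2 volume) (hy : MemLp y 2 volume) :
    Continuous (crossCorrelation x y) := by
  have hshift : ∀ τ : ℝ, MeasurePreserving (· + τ) (volume : Measure ℝ) volume :=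
    measurePreserving_add_right volume
  let shift : ℝ → C(ℝ, ℝ) := fun τ => ⟨(· + τ), by fun_prop⟩
  have hshift_cont : Continuous shift :=
    ContinuousMap.continuous_of_continuous_uncurry _ (continuous_snd.add continuous_fst)
  -- translation is continuous on L², so τ ↦ ⟪x(· + τ), y⟫ is continuous
  have hinner : Continuous fun τ =>
      (inner ℝ (Lp.compMeasurePreserving (shift τ) (hshift τ) (hx.toLp x)) (hy.toLp y) : ℝ) :=
    (continuous_const.compMeasurePreservingLp hshift_cont hshift (by norm_num)).inner
      continuous_const
  refine hinner.congr fun τ => ?_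
  rw [L2.inner_def]
  have hx_shift : ⇑(Lp.compMeasurePreserving (shift τ) (hshift τ) (hx.toLp x))
      =ᵐ[volume] fun t => x (t + τ) :=
    (Lp.coeFn_compMeasurePreserving _ _).trans
      (hx.coeFn_toLp.comp_tendsto (hshift τ).quasiMeasurePreserving.tendsto_ae)
  refine integral_congr_ae ?_
  filter_upwards [hx_shift, hy.coeFn_toLp] with t hxt hyt
  simp only [RCLike.inner_apply, conj_trivial, hxt, hyt, mul_comm]

lemma memLp_comp_sub_right (hy : MemLp y 2 volume) (s : ℝ) :
    MemLp (fun t => y (t - s)) 2 volume :=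
  hy.comp_measurePreserving (measurePreserving_sub_right volume s)

lemma exists_forall_integral_norm_mul_comp_sub_le (hx : MemLp x 2 volume)
    (hy : MemLp y 2 volume) : ∃ C, ∀ s, ∫ t, ‖x t‖ * ‖y (t - s)‖ ≤ C := by
  refine ⟨(∫ t, ‖x t‖ ^ (2:ℝ)) ^ ((1:ℝ)/2) * (∫ t, ‖y t‖ ^ (2:ℝ)) ^ ((1:ℝ)/2), fun s => ?_⟩
  have hys : MemLp (fun t => y (t - s)) (ENNReal.ofReal 2) volume := by
    simpa using memLp_comp_sub_right hy s
  have hholder := integral_mul_norm_le_Lp_mul_Lq Real.HolderConjugate.two_two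
    (by simpa using hx) hys
  rwa [integral_sub_right_eq_self (fun t => ‖y t‖ ^ (2:ℝ)) s] at hholder

lemma integrable_mul_conv_integrand (hz : Integrable z) (hx : MemLp x 2 volume)
    (hy : MemLp y 2 volume) :
    Integrable (Function.uncurry fun t s => x t * (z s * y (t - s))) (volume.prod volume) := by
  obtain ⟨C, hC⟩ := exists_forall_integral_norm_mul_comp_sub_le hx hy
  have hmeas : AEStronglyMeasurable (Function.uncurry fun t s => x t * (z s * y (t - s)))
      (volume.prod volume) := by
    refine (hx.aestronglyMeasurable.comp_quasiMeasurePreserving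
      Measure.quasiMeasurePreserving_fst).mul ?_
    simpa using hz.aestronglyMeasurable.convolution_integrand
      (L := ContinuousLinearMap.mul ℝ ℝ) hy.aestronglyMeasurable
  have hslice : ∀ s, ∫ t, ‖x t * (z s * y (t - s))‖ = ‖z s‖ * ∫ t, ‖x t‖ * ‖y (t - s)‖ := by
    intro s
    rw [← integral_const_mul]
    simp only [norm_mul]
    congr 1 with t
    ring
  refine (integrable_prod_iff' hmeas).2 ⟨Eventually.of_forall fun s => ?_, ?_⟩ <;>
    simp only [Function.uncurry_apply_pair]
  · simpa only [mul_left_comm (z s)] using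
      ((hx.integrable_mul (memLp_comp_sub_right hy s) :
        Integrable (fun t => x t * y (t - s))).const_mul (z s))
  · refine (hz.norm.mul_const C).mono' hmeas.prod_swap.norm.integral_prod_right'
      (Eventually.of_forall fun s => ?_)
    rw [Real.norm_of_nonneg (integral_nonneg fun t => norm_nonneg _), hslice]
    exact mul_le_mul_of_nonneg_left (hC s) (norm_nonneg _)

lemma integrable_mul_conv (hz : Integrable z) (hx : MemLp x 2 volume) (hy : MemLp y 2 volume) :
    Integrable (fun t => x t * conv z y t) volume :=
  (integrable_mul_conv_integrand hz hx hy).integral_prod_left.congr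
    (Eventually.of_forall fun t => integral_const_mul (x t) _)

lemma integral_mul_conv (hz : Integrable z) (hx : MemLp x 2 volume) (hy : MemLp y 2 volume) :
    ∫ t, x t * conv z y t = ∫ s, z s * crossCorrelation x y s := by
  have hfubini := integral_integral_swap (integrable_mul_conv_integrand hz hx hy)
  simp only [integral_const_mul] at hfubini
  refine hfubini.trans (integral_congr_ae (Eventually.of_forall fun s => ?_))
  simp only [crossCorrelation]
  rw [← integral_const_mul, ← integral_add_right_eq_self _ s]
  simp only [add_sub_cancel_right]
  congr 1 with t
  ring

lemma integral_mul_sub_conv (hz : Integrable z) (hx : MemLp x 2 volume)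
    (hy : MemLp y 2 volume) :
    ∫ t, x t * (y t - conv z y t) = crossCorrelation x y 0 - ∫ s, z s * crossCorrelation x y s := by
  have hxy : Integrable (fun t => x t * y t) := hx.integrable_mul hy
  simp only [mul_sub]
  rw [integral_sub hxy (integrable_mul_conv hz hx hy), integral_mul_conv hz hx hy,
    crossCorrelation_zero]

end Correlation

section DualityL1

variable {R : ℝ → ℝ} {M : ℝ}

lemma integral_mul_le_of_forall_abs_le (hR : AEStronglyMeasurable R volume)
    (hM : ∀ s, |R s| ≤ M) {z : ℝ → ℝ} (hz : Integrable z) (hz1 : ∫ s, |z s| ≤ 1) :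
    ∫ s, z s * R s ≤ M := by
  have hbound : ∀ s, |z s * R s| ≤ |z s| * M := fun s => by
    rw [abs_mul]; exact mul_le_mul_of_nonneg_left (hM s) (abs_nonneg _)
  have hzR : Integrable (fun s => z s * R s) :=
    (hz.abs.mul_const M).mono' (hz.aestronglyMeasurable.mul hR)
      (Eventually.of_forall hbound)
  calc ∫ s, z s * R s ≤ ∫ s, |z s| * M :=
        integral_mono hzR (hz.abs.mul_const M) fun s => (le_abs_self _).trans (hbound s)
    _ = (∫ s, |z s|) * M := integral_mul_const _ _
    _ ≤ 1 * M := mul_le_mul_of_nonneg_right hz1 ((abs_nonneg _).trans (hM 0))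
    _ = M := one_mul M

lemma tendsto_inv_mul_setIntegral_Ioc (hR : Continuous R) (τ : ℝ) :
    Tendsto (fun u => (u - τ)⁻¹ * ∫ s in Ioc τ u, R s) (𝓝[>] τ) (𝓝 (R τ)) := by
  have hderiv : HasDerivAt (fun u => ∫ s in τ..u, R s) (R τ) τ :=
    intervalIntegral.integral_hasDerivAt_right (hR.intervalIntegrable τ τ)
      hR.stronglyMeasurable.stronglyMeasurableAtFilter hR.continuousAt
  refine ((hasDerivAt_iff_tendsto_slope.1 hderiv).mono_left
    (nhdsWithin_mono τ fun u (hu : τ < u) => hu.ne')).congr' ?_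
  filter_upwards [self_mem_nhdsWithin] with u (hu : τ < u)
  rw [slope_def_field, intervalIntegral.integral_same, sub_zero,
    intervalIntegral.integral_of_le hu.le, div_eq_inv_mul]

lemma le_of_forall_integral_mul_le (hR : Continuous R)
    (h : ∀ z, Integrable z → ∫ s, |z s| ≤ 1 → ∫ s, z s * R s ≤ M) (τ : ℝ) : R τ ≤ M := by
  refine le_of_tendsto (tendsto_inv_mul_setIntegral_Ioc hR τ) ?_
  filter_upwards [self_mem_nhdsWithin] with u (hu : τ < u)
  have hlen : volume.real (Ioc τ u) = u - τ := Real.volume_real_Ioc_of_le hu.le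
  have hpos : 0 < u - τ := sub_pos.2 hu
  -- test against the normalised indicator of (τ, u], an approximate Dirac mass at τ
  set z := (Ioc τ u).indicator fun _ => (u - τ)⁻¹
  have hz : Integrable z := (integrable_indicator_iff measurableSet_Ioc).2 <|
    integrableOn_const (by simp)
  have hz1 : ∫ s, |z s| ≤ 1 := by
    have habs : (fun s => |z s|) = z := funext fun s => abs_of_nonneg <|
      indicator_nonneg (fun _ _ => inv_nonneg.2 hpos.le) s
    rw [habs, integral_indicator_const _ measurableSet_Ioc, hlen, smul_eq_mul,
      mul_inv_cancel₀ hpos.ne']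
  have hzR : ∫ s, z s * R s = (u - τ)⁻¹ * ∫ s in Ioc τ u, R s := by
    simp only [z, ← indicator_mul_left]
    rw [integral_indicator measurableSet_Ioc, integral_const_mul]
  exact hzR ▸ h z hz hz1

lemma forall_abs_le_iff_forall_integral_mul_le (hR : Continuous R) :
    (∀ τ, |R τ| ≤ M) ↔ ∀ z, Integrable z → ∫ s, |z s| ≤ 1 → ∫ s, z s * R s ≤ M := by
  refine ⟨fun hM z => integral_mul_le_of_forall_abs_le hR.aestronglyMeasurable hM,
    fun h τ => abs_le.2 ⟨?_, le_of_forall_integral_mul_le hR h τ⟩⟩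
  have hneg : ∀ z, Integrable z → ∫ s, |z s| ≤ 1 → ∫ s, z s * (-R) s ≤ M := by
    intro z hz hz1
    simpa using h (-z) hz.neg (by simpa using hz1)
  exact neg_le.1 (le_of_forall_integral_mul_le hR.neg hneg τ)

end DualityL1

lemma setIntegral_Ici_mul_eq_integral {y : ℝ → ℝ} (hy : ∀ t < (0:ℝ), y t = 0) (f : ℝ → ℝ) :
    ∫ t in Ici (0:ℝ), f t * y t = ∫ t, f t * y t :=
  setIntegral_eq_integral_of_forall_compl_eq_zero fun t ht => by
    rw [hy t (not_le.1 ht), mul_zero]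

lemma forall_abs_setIntegral_Ici_le_iff_forall_integral_mul_sub_conv_nonneg {x y : ℝ → ℝ}
    (hx : MemLp x 2 volume) (hy : MemLp y 2 volume) (hy0 : ∀ t < (0:ℝ), y t = 0) :
    (∀ τ, |∫ t in Ici (0:ℝ), x (t + τ) * y t| ≤ ∫ t in Ici (0:ℝ), x t * y t) ↔
      ∀ z : ℝ → ℝ, Integrable z → (∫ t, |z t|) ≤ 1 → 0 ≤ ∫ t, x t * (y t - conv z y t) := by
  simp only [setIntegral_Ici_mul_eq_integral hy0]
  rw [← crossCorrelation_zero]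
  refine (forall_abs_le_iff_forall_integral_mul_le (continuous_crossCorrelation hx hy)).trans ?_
  refine forall_congr' fun z => imp_congr_right fun hz => imp_congr_right fun _ => ?_
  rw [integral_mul_sub_conv hz hx hy, sub_nonneg]

theorem zames_falb_iqc_characterization_odd
    (Δ : (ℝ → ℝ) → (ℝ → ℝ))
    (hΔ : ∀ x, IsSignal x → IsSignal (Δ x)) :
    (∀ (τ : ℝ) (x : ℝ → ℝ), IsSignal x →
      |∫ t in Ici (0:ℝ), x (t + τ) * Δ x t| ≤ ∫ t in Ici (0:ℝ), x t * Δ x t)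
    ↔
    (∀ z : ℝ → ℝ, Integrable z → (∫ t, |z t|) ≤ 1 →
      ∀ x : ℝ → ℝ, IsSignal x →
        0 ≤ ∫ t, x t * (Δ x t - conv z (Δ x) t)) := by
  have key : ∀ x, IsSignal x → _ := fun x hx =>
    forall_abs_setIntegral_Ici_le_iff_forall_integral_mul_sub_conv_nonneg hx.1 (hΔ x hx).1
      (hΔ x hx).2
  exact ⟨fun h z hz hz1 x hx => (key x hx).1 (fun τ => h τ x hx) z hz hz1,
    fun h τ x hx => (key x hx).2 (fun z hz hz1 => h z hz hz1 x hx) τ⟩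
end

section
/- Let φ : ℝ → ℝ be measurable with φ(0) = 0 and suppose there exists C ≥ 0 such that |φ(u)| ≤ C·|u| for all u ∈ ℝ. Then the following are equivalent: (i) for all τ ∈ ℝ and all signals x in L²[0,∞), ∫₀^∞ x(t+τ)·φ(x(t)) dt ≤ ∫₀^∞ x(t)·φ(x(t)) dt; (ii) φ is monotone nondecreasing (u ≤ v implies φ(u) ≤ φ(v)). -/
open MeasureTheory Set

/-! If `φ` is nondecreasing, its primitive `Φ u = ∫ s in 0..u, φ s` is convex with
subgradient `φ`, so `(p - q) * φ q ≤ Φ p - Φ q`. Taking `p = x (t + τ)`, `q = x t` and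
integrating over `t ≥ 0` reduces the inequality to `∫ t ≥ 0, Φ (x (t + τ)) ≤ ∫ t ≥ 0, Φ (x t)`,
which holds because `Φ ≥ 0` and `Φ ∘ x` vanishes on `t < 0`, so the right side is a
shift-invariant integral over `ℝ`.

Conversely, if `u < v` and `φ v < φ u`, the step signal taking the values `u, v, u, …, v, u`
on `2N + 1` consecutive unit intervals, with `τ = 1`, gives
`N * (v - u) * (φ u - φ v) ≤ u * φ u` for every `N`. -/

theorem Monotone.mul_sub_le_integral {φ : ℝ → ℝ} (hφ : Monotone φ) (p q : ℝ) :
    (p - q) * φ q ≤ ∫ s in q..p, φ s := by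
  rcases le_total q p with hqp | hpq
  · calc (p - q) * φ q = ∫ _ in q..p, φ q := by simp
      _ ≤ ∫ s in q..p, φ s :=
        intervalIntegral.integral_mono_on hqp intervalIntegrable_const
          hφ.intervalIntegrable fun s hs => hφ hs.1
  · have h : ∫ s in p..q, φ s ≤ ∫ _ in p..q, φ q :=
      intervalIntegral.integral_mono_on hpq hφ.intervalIntegrable intervalIntegrable_const
        fun s hs => hφ hs.2
    rw [intervalIntegral.integral_symm]
    simp only [intervalIntegral.integral_const, smul_eq_mul] at h
    linarith

theorem abs_integral_le_mul_sq {φ : ℝ → ℝ} {C : ℝ} (hC : ∀ u, |φ u| ≤ C * |u|) (u : ℝ) :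
    |∫ s in (0:ℝ)..u, φ s| ≤ C * u ^ 2 := by
  have hC0 : 0 ≤ C := by simpa using (abs_nonneg (φ 1)).trans (hC 1)
  have h := intervalIntegral.norm_integral_le_of_norm_le_const (f := φ) (a := 0) (b := u)
    (C := C * |u|) fun s hs => (hC s).trans <| mul_le_mul_of_nonneg_left
      (by simpa using abs_sub_left_of_mem_uIcc (uIoc_subset_uIcc hs)) hC0
  simpa [mul_assoc, ← sq] using h

theorem setIntegral_Ici_comp_add_le {G : ℝ → ℝ} (hG : Integrable G) (hG0 : ∀ t, 0 ≤ G t)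
    (hGneg : ∀ t < 0, G t = 0) (τ : ℝ) :
    ∫ t in Ici 0, G (t + τ) ≤ ∫ t in Ici 0, G t :=
  calc ∫ t in Ici 0, G (t + τ) ≤ ∫ t, G (t + τ) :=
        setIntegral_le_integral (hG.comp_add_right τ) (.of_forall fun _ => hG0 _)
    _ = ∫ t, G t := integral_add_right_eq_self G τ
    _ = ∫ t in Ici 0, G t :=
        (setIntegral_eq_integral_of_forall_compl_eq_zero fun t ht => hGneg t (not_le.1 ht)).symm

theorem shift_ineq_of_monotone {φ : ℝ → ℝ} {C : ℝ} (hmono : Monotone φ) (hφ0 : φ 0 = 0)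
    (hC : ∀ u, |φ u| ≤ C * |u|) (τ : ℝ) {x : ℝ → ℝ} (hx : IsSignal x) :
    ∫ t in Ici 0, x (t + τ) * φ (x t) ≤ ∫ t in Ici 0, x t * φ (x t) := by
  set Φ : ℝ → ℝ := fun u => ∫ s in (0:ℝ)..u, φ s
  have hΦ_sub (p q : ℝ) : Φ p - Φ q = ∫ s in q..p, φ s :=
    intervalIntegral.integral_interval_sub_left hmono.intervalIntegrable hmono.intervalIntegrable
  have hΦ_nonneg (u : ℝ) : 0 ≤ Φ u := by
    simpa [hφ0] using hmono.mul_sub_le_integral u 0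
  have hφx : MemLp (fun t => φ (x t)) 2 :=
    hx.1.of_le_mul (hmono.measurable.comp_aemeasurable hx.1.aemeasurable).aestronglyMeasurable
      (.of_forall fun t => by simpa only [Real.norm_eq_abs] using hC (x t))
  have hΦ_cont : Continuous Φ :=
    intervalIntegral.continuous_primitive (fun _ _ => hmono.intervalIntegrable) 0
  have hΦx : Integrable (fun t => Φ (x t)) :=
    (hx.1.integrable_sq.const_mul C).mono'
      (hΦ_cont.comp_aestronglyMeasurable hx.1.aestronglyMeasurable)
      (.of_forall fun t => by
        simpa only [Real.norm_eq_abs] using abs_integral_le_mul_sq hC (x t))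
  have hshift : Integrable (fun t => x (t + τ) * φ (x t)) :=
    (hx.1.comp_measurePreserving (measurePreserving_add_right volume τ)).integrable_mul hφx
  have hdiag : Integrable (fun t => x t * φ (x t)) := hx.1.integrable_mul hφx
  have hΦshift : Integrable (fun t => Φ (x (t + τ))) := hΦx.comp_add_right τ
  have hΦdiff : Integrable (fun t => Φ (x (t + τ)) - Φ (x t)) := hΦshift.sub hΦx
  calc ∫ t in Ici 0, x (t + τ) * φ (x t)
      ≤ ∫ t in Ici 0, (x t * φ (x t) + (Φ (x (t + τ)) - Φ (x t))) :=
        setIntegral_mono hshift.integrableOn (hdiag.add hΦdiff).integrableOn fun t => by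
          linarith [hΦ_sub (x (t + τ)) (x t), hmono.mul_sub_le_integral (x (t + τ)) (x t)]
    _ = (∫ t in Ici 0, x t * φ (x t))
          + ((∫ t in Ici 0, Φ (x (t + τ))) - ∫ t in Ici 0, Φ (x t)) := by
        rw [integral_add hdiag.integrableOn hΦdiff.integrableOn,
          integral_sub hΦshift.integrableOn hΦx.integrableOn]
    _ ≤ ∫ t in Ici 0, x t * φ (x t) := by
        have := setIntegral_Ici_comp_add_le hΦx (fun t => hΦ_nonneg (x t))
          (fun t ht => by simp [hx.2 t ht, Φ]) τ
        linarith

noncomputable def stepSignal (a : ℕ → ℝ) (n : ℕ) : ℝ → ℝ :=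
  (Ico 0 (n : ℝ)).indicator fun t => a ⌊t⌋₊

theorem memLp_floor_comp_restrict_Ico (a : ℕ → ℝ) (n : ℕ) (p : ENNReal) :
    MemLp (fun t : ℝ => a ⌊t⌋₊) p (volume.restrict (Ico 0 (n : ℝ))) := by
  refine MemLp.of_bound (measurable_from_nat.comp Nat.measurable_floor).aestronglyMeasurable
    (∑ k ∈ Finset.range n, |a k|)
    ((ae_restrict_iff' measurableSet_Ico).2 (.of_forall fun t ht => ?_))
  have hk : ⌊t⌋₊ ∈ Finset.range n := Finset.mem_range.2 ((Nat.floor_lt ht.1).2 ht.2)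
  exact Finset.single_le_sum (f := fun k => |a k|) (fun _ _ => abs_nonneg _) hk

theorem isSignal_stepSignal (a : ℕ → ℝ) (n : ℕ) : IsSignal (stepSignal a n) :=
  ⟨(memLp_indicator_iff_restrict measurableSet_Ico).2 (memLp_floor_comp_restrict_Ico a n 2),
    fun _ ht => indicator_of_notMem (fun h => (not_le.2 ht) h.1) _⟩

theorem setIntegral_Ici_stepSignal (a : ℕ → ℝ) (n : ℕ) :
    ∫ t in Ici 0, stepSignal a n t = ∑ k ∈ Finset.range n, a k := by
  rw [stepSignal, setIntegral_indicator measurableSet_Ico,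
    inter_eq_right.2 Ico_subset_Ici_self]
  induction n with
  | zero => simp
  | succ n ih =>
    have hint : IntegrableOn (fun t : ℝ => a ⌊t⌋₊) (Ico 0 (n + 1 : ℕ)) :=
      memLp_one_iff_integrable.1 (memLp_floor_comp_restrict_Ico a (n + 1) 1)
    rw [Nat.cast_succ] at hint
    rw [Finset.sum_range_succ, ← ih, Nat.cast_succ,
      ← Ico_union_Ico_eq_Ico (Nat.cast_nonneg n) (by linarith),
      setIntegral_union Ico_disjoint_Ico_same measurableSet_Ico
        (hint.mono_set (Ico_subset_Ico_right (by linarith)))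
        (hint.mono_set (Ico_subset_Ico_left (Nat.cast_nonneg n))),
      setIntegral_congr_fun (s := Ico (n : ℝ) (n + 1)) measurableSet_Ico (g := fun _ => a n)
        fun t ht => by simp only [Nat.floor_eq_on_Ico n t ht]]
    simp

theorem stepSignal_mul_apply (a : ℕ → ℝ) (n : ℕ) (φ : ℝ → ℝ) (t : ℝ) :
    stepSignal a n t * φ (stepSignal a n t) = stepSignal (fun k => a k * φ (a k)) n t := by
  simp only [stepSignal, indicator]
  split_ifs <;> simp

theorem stepSignal_add_one_mul_apply (a : ℕ → ℝ) (n : ℕ) (φ : ℝ → ℝ) {t : ℝ} (ht : 0 ≤ t) :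
    stepSignal a (n + 1) (t + 1) * φ (stepSignal a (n + 1) t)
      = stepSignal (fun k => a (k + 1) * φ (a k)) n t := by
  simp only [stepSignal]
  by_cases htn : t < n
  · have ht₁ : t + 1 ∈ Ico (0 : ℝ) ↑(n + 1) := ⟨by linarith, by push_cast; linarith⟩
    have ht₀ : t ∈ Ico (0 : ℝ) ↑(n + 1) := ⟨ht, by push_cast; linarith⟩
    have ht : t ∈ Ico (0 : ℝ) n := ⟨ht, htn⟩
    rw [indicator_of_mem ht₁, indicator_of_mem ht₀, indicator_of_mem ht, Nat.floor_add_one ht.1]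
  · have ht₁ : t + 1 ∉ Ico (0 : ℝ) ↑(n + 1) := fun h => htn (by push_cast at h; linarith [h.2])
    have ht : t ∉ Ico (0 : ℝ) n := fun h => htn h.2
    rw [indicator_of_notMem ht₁, indicator_of_notMem ht, zero_mul]

theorem sum_range_two_mul_of_periodic (f : ℕ → ℝ) (hf : Function.Periodic f 2) (N : ℕ) :
    ∑ k ∈ Finset.range (2 * N), f k = N * (f 0 + f 1) := by
  induction N with
  | zero => simp
  | succ N ih =>
    have h0 : f (2 * N) = f 0 := by simpa [mul_comm] using hf.nat_mul_eq N
    have h1 : f (2 * N + 1) = f 1 := by simpa [mul_comm, add_comm] using hf.nat_mul N 1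
    rw [mul_add_one, Finset.sum_range_succ, Finset.sum_range_succ, ih, h0, h1]
    push_cast; ring

theorem monotone_of_shift_ineq {φ : ℝ → ℝ}
    (H : ∀ x, IsSignal x → ∫ t in Ici 0, x (t + 1) * φ (x t) ≤ ∫ t in Ici 0, x t * φ (x t)) :
    Monotone φ := by
  intro u v huv
  refine le_of_not_gt fun hφuv => ?_
  set a : ℕ → ℝ := fun k => if Even k then u else v
  have ha : Function.Periodic a 2 := fun k => by simp [a, Nat.even_add]
  have hbound (N : ℕ) : N * ((v - u) * (φ u - φ v)) ≤ u * φ u := by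
    have h := H _ (isSignal_stepSignal a (2 * N + 1))
    rw [setIntegral_congr_fun measurableSet_Ici fun t ht => stepSignal_add_one_mul_apply a _ φ ht,
      funext (stepSignal_mul_apply a _ φ ·), setIntegral_Ici_stepSignal,
      setIntegral_Ici_stepSignal, Finset.sum_range_succ,
      sum_range_two_mul_of_periodic _ (fun k => by rw [ha, ha]),
      sum_range_two_mul_of_periodic _ (fun k => by rw [ha])] at h
    simp only [a, zero_add, Nat.not_even_one, ↓reduceIte, Even.zero, Nat.reduceAdd, even_two,
      Even.mul_right] at h
    linarith
  have hpos : 0 < (v - u) * (φ u - φ v) :=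
    mul_pos (sub_pos.2 (huv.lt_of_ne (by rintro rfl; exact lt_irrefl _ hφuv))) (sub_pos.2 hφuv)
  obtain ⟨N, hN⟩ := exists_nat_gt (u * φ u / ((v - u) * (φ u - φ v)))
  rw [div_lt_iff₀ hpos] at hN
  linarith [hbound N]

theorem static_shift_ineq_iff_monotone_general
    (φ : ℝ → ℝ) (hφ0 : φ 0 = 0)
    (hbound : ∃ C : ℝ, 0 ≤ C ∧ ∀ u : ℝ, |φ u| ≤ C * |u|) :
    (∀ (τ : ℝ) (x : ℝ → ℝ), IsSignal x →
      ∫ t in Ici (0:ℝ), x (t + τ) * φ (x t) ≤ ∫ t in Ici (0:ℝ), x t * φ (x t))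
    ↔ Monotone φ := by
  obtain ⟨C, -, hC⟩ := hbound
  exact ⟨fun H => monotone_of_shift_ineq fun x hx => H 1 x hx,
    fun hmono τ x hx => shift_ineq_of_monotone hmono hφ0 hC τ hx⟩

theorem static_shift_ineq_iff_monotone
    (φ : ℝ → ℝ) (hφ : Measurable φ) (hφ0 : φ 0 = 0)
    (hbound : ∃ C : ℝ, 0 ≤ C ∧ ∀ u : ℝ, |φ u| ≤ C * |u|) :
    (∀ (τ : ℝ) (x : ℝ → ℝ), IsSignal x →
      ∫ t in Ici (0:ℝ), x (t + τ) * φ (x t) ≤ ∫ t in Ici (0:ℝ), x t * φ (x t))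
    ↔ Monotone φ :=
  static_shift_ineq_iff_monotone_general φ hφ0 hbound
end

section
/- Let H be a real Hilbert space, Π : H → H a bounded linear operator with operator norm ‖Π‖, and ε > 0. Then there exists γ > 0 (depending only on ε and ‖Π‖) such that for all ν₁, ν₂ ∈ H satisfying ⟨ν₁, Π ν₁⟩ ≤ −ε·‖ν₁‖² and ⟨ν₂, Π ν₂⟩ ≥ 0, one has γ·(‖ν₁‖² + ‖ν₂‖²) ≤ ‖ν₂ − ν₁‖². -/
open RealInnerProductSpace

set_option maxHeartbeats 1000000 in
theorem graph_separation_estimate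
    {H : Type*} [NormedAddCommGroup H] [InnerProductSpace ℝ H] [CompleteSpace H]
    (Pi : H →L[ℝ] H) (ε : ℝ) (hε : 0 < ε) :
    ∃ γ : ℝ, 0 < γ ∧ ∀ ν₁ ν₂ : H,
      ⟪ν₁, Pi ν₁⟫ ≤ -ε * ‖ν₁‖ ^ 2 → 0 ≤ ⟪ν₂, Pi ν₂⟫ →
      γ * (‖ν₁‖ ^ 2 + ‖ν₂‖ ^ 2) ≤ ‖ν₂ - ν₁‖ ^ 2 := by
  set C : ℝ := ‖Pi‖ + 1 with hCdef
  have hC : 1 ≤ C := by have := norm_nonneg Pi; linarith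
  have hD : (0:ℝ) < 12 * C ^ 2 + 6 * ε * C + 2 * ε ^ 2 := by nlinarith
  refine ⟨ε ^ 2 / (12 * C ^ 2 + 6 * ε * C + 2 * ε ^ 2), by positivity, ?_⟩
  intro ν₁ ν₂ h1 h2
  set a := ‖ν₁‖ with ha
  set b := ‖ν₂‖ with hb
  set δ := ‖ν₂ - ν₁‖ with hδ
  have ha0 : 0 ≤ a := norm_nonneg _
  have hb0 : 0 ≤ b := norm_nonneg _
  have hδ0 : 0 ≤ δ := norm_nonneg _
  -- triangle inequality
  have htri : b ≤ a + δ := by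
    have := norm_add_le ν₁ (ν₂ - ν₁)
    simpa [ha, hb, hδ, add_comm] using this
  -- key identity and bound
  have hid : ⟪ν₂, Pi ν₂⟫ - ⟪ν₁, Pi ν₁⟫ = ⟪ν₂ - ν₁, Pi ν₂⟫ + ⟪ν₁, Pi (ν₂ - ν₁)⟫ := by
    rw [map_sub, inner_sub_left, inner_sub_right]; ring
  have hbd1 : ⟪ν₂ - ν₁, Pi ν₂⟫ ≤ C * δ * b := by
    calc ⟪ν₂ - ν₁, Pi ν₂⟫ ≤ ‖ν₂ - ν₁‖ * ‖Pi ν₂‖ := real_inner_le_norm _ _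
      _ ≤ δ * (‖Pi‖ * b) := by
          exact mul_le_mul_of_nonneg_left (Pi.le_opNorm ν₂) hδ0
      _ ≤ C * δ * b := by rw [hCdef]; nlinarith [mul_nonneg hδ0 hb0]
  have hbd2 : ⟪ν₁, Pi (ν₂ - ν₁)⟫ ≤ C * δ * a := by
    calc ⟪ν₁, Pi (ν₂ - ν₁)⟫ ≤ ‖ν₁‖ * ‖Pi (ν₂ - ν₁)‖ := real_inner_le_norm _ _
      _ ≤ a * (‖Pi‖ * δ) := by
          exact mul_le_mul_of_nonneg_left (Pi.le_opNorm _) ha0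
      _ ≤ C * δ * a := by rw [hCdef]; nlinarith [mul_nonneg hδ0 ha0]
  have hkey : ε * a ^ 2 ≤ C * δ * b + C * δ * a := by
    have : ε * a ^ 2 ≤ ⟪ν₂, Pi ν₂⟫ - ⟪ν₁, Pi ν₁⟫ := by
      have := h1; nlinarith
    rw [hid] at this; linarith
  rw [div_mul_eq_mul_div, div_le_iff₀ hD]
  have hC0 : (0:ℝ) ≤ C := by linarith
  have h3 : ε * a ^ 2 ≤ 2 * C * δ * a + C * δ ^ 2 := by
    nlinarith [mul_le_mul_of_nonneg_left htri (mul_nonneg hC0 hδ0)]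
  have h4 : ε ^ 2 * a ^ 2 ≤ 4 * C ^ 2 * δ ^ 2 + 2 * ε * C * δ ^ 2 := by
    nlinarith [sq_nonneg (ε * a - 2 * C * δ), mul_le_mul_of_nonneg_left h3 hε.le]
  have h5 : b ^ 2 ≤ 2 * a ^ 2 + 2 * δ ^ 2 := by
    nlinarith [mul_le_mul htri htri hb0 (by linarith : (0:ℝ) ≤ a + δ), sq_nonneg (a - δ)]
  nlinarith [h4, mul_le_mul_of_nonneg_left h5 (sq_nonneg ε)]
end

section
/- Let v : ℝ → ℝ be the indicator function of the interval [0,1] (v(t) = 1 for t ∈ [0,1] and v(t) = 0 otherwise). Then for every z ∈ L¹(ℝ) with ‖z‖₁ ≤ 1, one has ∫_ℝ v(t)·(v(t) − (z∗v)(t)) dt > 0 (strict inequality). -/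
/-!
Writing `v` for the indicator of `[0, 1]`, Fubini turns `∫ v · (z ∗ v)` into `∫ z φ`, where
`φ s = |[0, 1] ∩ [s, 1 + s]|` is the autocorrelation of `v`. Since `0 ≤ φ ≤ 1` with `φ s < 1` for
`s ≠ 0`, `∫ z φ ≥ 1 ≥ ∫ |z|` would force `|z| (1 - φ) = 0` a.e., hence `z = 0` a.e.,
and then `∫ z φ = 0`. So `∫ v (v - z ∗ v) = 1 - ∫ z φ > 0`.
-/

open MeasureTheory Set

section MulConv

variable {u z w : ℝ → ℝ} {C : ℝ}

theorem integrable_mul_convolution_integrand (hu : AEStronglyMeasurable u) (huC : ∀ t, ‖u t‖ ≤ C)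
    (hz : Integrable z) (hw : Integrable w) :
    Integrable (fun p : ℝ × ℝ => u p.1 * (z p.2 * w (p.1 - p.2))) (volume.prod volume) :=
  (hz.convolution_integrand (ContinuousLinearMap.mul ℝ ℝ) hw).bdd_mul hu.comp_fst
    (ae_of_all _ fun p => huC p.1)

theorem integrable_mul_conv_s7 (hu : AEStronglyMeasurable u) (huC : ∀ t, ‖u t‖ ≤ C)
    (hz : Integrable z) (hw : Integrable w) : Integrable (fun t => u t * conv z w t) := by
  simpa only [conv, integral_const_mul] using
    (integrable_mul_convolution_integrand hu huC hz hw).integral_prod_left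

theorem integral_mul_conv_s7 (hu : AEStronglyMeasurable u) (huC : ∀ t, ‖u t‖ ≤ C)
    (hz : Integrable z) (hw : Integrable w) :
    ∫ t, u t * conv z w t = ∫ s, z s * ∫ t, u t * w (t - s) := by
  calc ∫ t, u t * conv z w t = ∫ t, ∫ s, u t * (z s * w (t - s)) := by
        simp only [conv, integral_const_mul]
    _ = ∫ s, ∫ t, u t * (z s * w (t - s)) :=
        integral_integral_swap (integrable_mul_convolution_integrand hu huC hz hw)
    _ = ∫ s, z s * ∫ t, u t * w (t - s) := by
        simp only [← integral_const_mul, mul_left_comm (u _)]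

end MulConv

theorem integral_mul_lt_one_of_abs_lt_one {z φ : ℝ → ℝ} (hz : Integrable z) (hz1 : ∫ s, |z s| ≤ 1)
    (hφ : AEStronglyMeasurable φ) (hφ1 : ∀ s, |φ s| ≤ 1) (hφlt : ∀ᵐ s, |φ s| < 1) :
    ∫ s, z s * φ s < 1 := by
  have hzφ : Integrable (fun s => z s * φ s) := hz.mul_bdd hφ (ae_of_all _ hφ1)
  have habs : Integrable (fun s => |z s| * |φ s|) := by simpa only [abs_mul] using hzφ.abs
  have hgap_nonneg : 0 ≤ fun s => |z s| - |z s| * |φ s| :=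
    fun s => sub_nonneg.2 (mul_le_of_le_one_right (abs_nonneg _) (hφ1 s))
  have hgap : Integrable (fun s => |z s| - |z s| * |φ s|) := hz.abs.sub habs
  by_contra! h
  have hle : ∫ s, z s * φ s ≤ ∫ s, |z s| * |φ s| :=
    integral_mono hzφ habs fun s => abs_mul (z s) (φ s) ▸ le_abs_self _
  have hgap0 : ∫ s, |z s| - |z s| * |φ s| = 0 := by
    linarith [integral_nonneg (μ := volume) hgap_nonneg, integral_sub hz.abs habs]
  have hz0 : z =ᵐ[volume] 0 := by
    filter_upwards [(integral_eq_zero_iff_of_nonneg hgap_nonneg hgap).1 hgap0, hφlt]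
      with s (hs : |z s| - |z s| * |φ s| = 0) hslt
    have : |z s| * (1 - |φ s|) = 0 := by linear_combination hs
    simpa [(sub_pos.2 hslt).ne'] using this
  have : ∫ s, z s * φ s = 0 := by
    rw [integral_eq_zero_of_ae]
    filter_upwards [hz0] with s hs
    simp [hs]
  linarith

theorem integral_indicator_Icc_mul_shift (s : ℝ) :
    ∫ t, (Icc (0:ℝ) 1).indicator (fun _ => (1:ℝ)) t * (Icc (0:ℝ) 1).indicator (fun _ => 1) (t - s)
      = max (min 1 (1 + s) - max 0 s) 0 := by
  have hprod : ∀ t, (Icc (0:ℝ) 1).indicator (fun _ => (1:ℝ)) t *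
      (Icc (0:ℝ) 1).indicator (fun _ => 1) (t - s) =
      (Icc (max 0 s) (min 1 (1 + s))).indicator (fun _ => 1) t := by
    intro t
    simp only [indicator, mem_Icc, max_le_iff, le_min_iff, sub_nonneg, sub_le_iff_le_add]
    split_ifs <;> first | (exfalso; tauto) | simp
  simp only [hprod, integral_indicator_const _ measurableSet_Icc, Real.volume_real_Icc,
    smul_eq_mul, mul_one]

theorem abs_max_min_sub_max_le_one (s : ℝ) : |max (min 1 (1 + s) - max 0 s) 0| ≤ 1 := by
  rw [abs_of_nonneg (le_max_right _ _)]
  exact max_le (by linarith [min_le_left 1 (1 + s), le_max_left 0 s]) zero_le_one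

theorem abs_max_min_sub_max_lt_one {s : ℝ} (hs : s ≠ 0) :
    |max (min 1 (1 + s) - max 0 s) 0| < 1 := by
  rw [abs_of_nonneg (le_max_right _ _)]
  refine max_lt ?_ zero_lt_one
  rcases hs.lt_or_gt with h | h
  · linarith [min_le_right 1 (1 + s), le_max_left 0 s]
  · linarith [min_le_left 1 (1 + s), le_max_right 0 s]

theorem indicator_strict_positivity
    (v : ℝ → ℝ) (hv : v = Set.indicator (Icc (0:ℝ) 1) (fun _ => (1:ℝ))) :
    ∀ z : ℝ → ℝ, Integrable z → (∫ t, |z t|) ≤ 1 →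
      0 < ∫ t, v t * (v t - conv z v t) := by
  intro z hz hz1
  have hv_int : Integrable v := by
    rw [hv, integrable_indicator_iff measurableSet_Icc]
    exact integrableOn_const (by simp) (by simp)
  have hv_meas : AEStronglyMeasurable v := hv_int.aestronglyMeasurable
  have hv_le : ∀ t, ‖v t‖ ≤ 1 := fun t => by
    rw [hv]; exact (norm_indicator_le_norm_self _ t).trans (by simp)
  have hv_sq : ∀ t, v t * v t = v t := fun t => by
    rw [hv]; by_cases ht : t ∈ Icc (0:ℝ) 1 <;> simp [ht]
  have hv_integral : ∫ t, v t = 1 := by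
    simp [hv, integral_indicator_const _ measurableSet_Icc]
  have hsplit : ∫ t, v t * (v t - conv z v t) = 1 - ∫ s, z s * ∫ t, v t * v (t - s) := by
    simp only [mul_sub, hv_sq]
    rw [integral_sub hv_int (integrable_mul_conv_s7 hv_meas hv_le hz hv_int),
      integral_mul_conv_s7 hv_meas hv_le hz hv_int, hv_integral]
  rw [hsplit, sub_pos, hv]
  simp only [integral_indicator_Icc_mul_shift]
  exact integral_mul_lt_one_of_abs_lt_one hz hz1 (by fun_prop : Continuous _).aestronglyMeasurable
    abs_max_min_sub_max_le_one ((Measure.ae_ne volume 0).mono fun _ => abs_max_min_sub_max_lt_one)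
end

section
/- Let 0 ≤ a < b be real numbers and let Δ be a map on signals such that for every signal x in L²[0,∞), the image Δx is again a signal in L²[0,∞), and which satisfies the slope inequality: for all τ ∈ ℝ and all signals x in L²[0,∞), with y := Δx, ∫₀^∞ (x − b⁻¹y)(t+τ)·(−a·x + y)(t) dt ≤ ∫₀^∞ (x − b⁻¹y)(t)·(−a·x + y)(t) dt. Then for every θ ∈ [0,1], the map x ↦ θ·(Δx) + (1−θ)·a·x also satisfies the same slope inequality (with y replaced by θ·(Δx) + (1−θ)·a·x). -/
/-!
Write `u = x - b⁻¹ Δx` and `v = -a x + Δx`, so that the slope inequality says that the shifted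
pairing `τ ↦ ∫₀^∞ u(t+τ) v(t) dt` is maximal at `τ = 0`. For the homotopy
`Δ_θ x = θ Δx + (1-θ) a x` the corresponding pair is `(u + (1-θ) b⁻¹ v, θ v)`, so its shifted
pairing is `θ` times that of `(u, v)` plus `θ (1-θ) b⁻¹` times the autocorrelation of `v`. Both are
maximal at `τ = 0`: the first by hypothesis, the second by `2pq ≤ p² + q²` and translation
invariance of Lebesgue measure, and the coefficients are nonnegative because `0 ≤ θ ≤ 1` and `b > 0`.
-/

open MeasureTheory Set

/-- The [a,b]-slope shift inequality for a map `Δ` on signals. -/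
def SlopeIneq (a b : ℝ) (Δ : (ℝ → ℝ) → (ℝ → ℝ)) : Prop :=
  ∀ (τ : ℝ) (x : ℝ → ℝ), IsSignal x →
    ∫ t in Ici (0:ℝ), (x (t + τ) - b⁻¹ * Δ x (t + τ)) * (-a * x t + Δ x t)
      ≤ ∫ t in Ici (0:ℝ), (x t - b⁻¹ * Δ x t) * (-a * x t + Δ x t)

section Autocorrelation

variable {G : Type*} [MeasurableSpace G] [AddGroup G] [MeasurableAdd G]
  {μ : Measure G} [μ.IsAddRightInvariant]

theorem MeasureTheory.MemLp.comp_add_right {E : Type*} [NormedAddCommGroup E] {p : ENNReal}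
    {f : G → E} (hf : MemLp f p μ) (g : G) :
    MemLp (fun x => f (x + g)) p μ :=
  hf.comp_measurePreserving (measurePreserving_add_right μ g)

theorem integral_mul_comp_add_right_le {f : G → ℝ} (hf : MemLp f 2 μ) (g : G) :
    ∫ x, f (x + g) * f x ∂μ ≤ ∫ x, f x * f x ∂μ := by
  have hfg := hf.comp_add_right g
  have hsq : Integrable (fun x => f x * f x) μ := hf.integrable_mul hf
  have hsq_shift : Integrable (fun x => f (x + g) * f (x + g)) μ := hfg.integrable_mul hfg
  calc ∫ x, f (x + g) * f x ∂μ
      ≤ ∫ x, (f (x + g) * f (x + g) + f x * f x) / 2 ∂μ := by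
        refine integral_mono (hfg.integrable_mul hf) ((hsq_shift.add hsq).div_const 2) fun x => ?_
        linarith [two_mul_le_add_sq (f (x + g)) (f x)]
    _ = ∫ x, f x * f x ∂μ := by
        rw [integral_div, integral_add hsq_shift hsq,
          integral_add_right_eq_self (fun x => f x * f x) g]
        ring

end Autocorrelation

theorem setIntegral_Ici_mul_comp_add_right_le {v : ℝ → ℝ} (hv : IsSignal v) (τ : ℝ) :
    ∫ t in Ici (0:ℝ), v (t + τ) * v t ≤ ∫ t in Ici (0:ℝ), v t * v t := by
  have vanish (w : ℝ → ℝ) : ∀ t ∉ Ici (0:ℝ), w t * v t = 0 := fun t ht => by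
    rw [hv.2 t (not_le.mp ht), mul_zero]
  rw [setIntegral_eq_integral_of_forall_compl_eq_zero (vanish _),
    setIntegral_eq_integral_of_forall_compl_eq_zero (vanish _)]
  exact integral_mul_comp_add_right_le hv.1 τ

theorem setIntegral_Ici_combination_mul_comp_add_right_le {u v : ℝ → ℝ}
    (hu : MemLp u 2 volume) (hv : IsSignal v) {τ θ c : ℝ} (hθ : 0 ≤ θ) (hc : 0 ≤ c)
    (huv : ∫ t in Ici (0:ℝ), u (t + τ) * v t ≤ ∫ t in Ici (0:ℝ), u t * v t) :
    ∫ t in Ici (0:ℝ), (θ * u (t + τ) + c * v (t + τ)) * v t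
      ≤ ∫ t in Ici (0:ℝ), (θ * u t + c * v t) * v t := by
  have expand (s : ℝ) : ∫ t in Ici (0:ℝ), (θ * u (t + s) + c * v (t + s)) * v t
      = (θ * ∫ t in Ici (0:ℝ), u (t + s) * v t) + c * ∫ t in Ici (0:ℝ), v (t + s) * v t := by
    have hus : Integrable (fun t => u (t + s) * v t) := (hu.comp_add_right s).integrable_mul hv.1
    have hvs : Integrable (fun t => v (t + s) * v t) :=
      (hv.1.comp_add_right s).integrable_mul hv.1
    simp only [add_mul, mul_assoc]
    rw [integral_add (hus.integrableOn.const_mul θ) (hvs.integrableOn.const_mul c),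
      integral_const_mul, integral_const_mul]
  calc ∫ t in Ici (0:ℝ), (θ * u (t + τ) + c * v (t + τ)) * v t
      = (θ * ∫ t in Ici (0:ℝ), u (t + τ) * v t) + c * ∫ t in Ici (0:ℝ), v (t + τ) * v t := expand τ
    _ ≤ (θ * ∫ t in Ici (0:ℝ), u t * v t) + c * ∫ t in Ici (0:ℝ), v t * v t :=
        add_le_add (mul_le_mul_of_nonneg_left huv hθ)
          (mul_le_mul_of_nonneg_left (setIntegral_Ici_mul_comp_add_right_le hv τ) hc)
    _ = ∫ t in Ici (0:ℝ), (θ * u t + c * v t) * v t := by simpa using (expand 0).symm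

theorem slope_ineq_homotopy
    (a b : ℝ) (ha : 0 ≤ a) (hab : a < b)
    (Δ : (ℝ → ℝ) → (ℝ → ℝ))
    (hΔ : ∀ x, IsSignal x → IsSignal (Δ x))
    (hslope : SlopeIneq a b Δ) :
    ∀ θ : ℝ, θ ∈ Icc (0:ℝ) 1 →
      SlopeIneq a b (fun x => fun t => θ * Δ x t + (1 - θ) * a * x t) := by
  rintro θ ⟨hθ0, hθ1⟩ τ x hx
  have hy := hΔ x hx
  have hv : IsSignal (fun t => -a * x t + Δ x t) :=
    ⟨(hx.1.const_mul (-a)).add hy.1, fun t ht => by simp [hx.2 t ht, hy.2 t ht]⟩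
  have hb : 0 ≤ b⁻¹ := inv_nonneg.2 (ha.trans hab.le)
  have integrand_eq : ∀ s t : ℝ,
      (x s - b⁻¹ * (θ * Δ x s + (1 - θ) * a * x s)) * (-a * x t + (θ * Δ x t + (1 - θ) * a * x t))
        = (θ * (x s - b⁻¹ * Δ x s) + θ * (1 - θ) * b⁻¹ * (-a * x s + Δ x s))
          * (-a * x t + Δ x t) := by
    intro s t; ring
  simp only [integrand_eq]
  exact setIntegral_Ici_combination_mul_comp_add_right_le (hx.1.sub (hy.1.const_mul _)) hv hθ0
    (mul_nonneg (mul_nonneg hθ0 (sub_nonneg.2 hθ1)) hb) (hslope τ x hx)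
end

section
/- Let 0 ≤ a < b be real numbers and let Δ be a map on signals such that for every signal x in L²[0,∞), the image Δx is again a signal in L²[0,∞), and which satisfies the two-sided slope inequality: for all τ ∈ ℝ and all signals x in L²[0,∞), with y := Δx, |∫₀^∞ (x − b⁻¹y)(t+τ)·(−a·x + y)(t) dt| ≤ ∫₀^∞ (x − b⁻¹y)(t)·(−a·x + y)(t) dt. Then for every θ ∈ [0,1], the map x ↦ θ·(Δx) + (1−θ)·a·x also satisfies the same two-sided slope inequality (with y replaced by θ·(Δx) + (1−θ)·a·x). -/
open MeasureTheory Set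

/-- The two-sided [a,b]-slope shift inequality for a map `Δ` on signals. -/
def AbsSlopeIneq (a b : ℝ) (Δ : (ℝ → ℝ) → (ℝ → ℝ)) : Prop :=
  ∀ (τ : ℝ) (x : ℝ → ℝ), IsSignal x →
    |∫ t in Ici (0:ℝ), (x (t + τ) - b⁻¹ * Δ x (t + τ)) * (-a * x t + Δ x t)|
      ≤ ∫ t in Ici (0:ℝ), (x t - b⁻¹ * Δ x t) * (-a * x t + Δ x t)

/-! Write `u = x - b⁻¹ Δx` and `v = -a x + Δx`. For the homotopy `Δ_θ = θ Δ + (1 - θ) a`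
the same two signals become `u + (1 - θ) b⁻¹ v` and `θ v`, so by bilinearity its slope
correlation at lag `τ` is `θ ⟨u(· + τ), v⟩ + θ (1 - θ) b⁻¹ ⟨v(· + τ), v⟩` (inner products over
`[0, ∞)`). The first term is controlled by the hypothesis on `Δ`, the second by the elementary
autocorrelation bound `|⟨v(· + τ), v⟩| ≤ ⟨v, v⟩` for causal `v`, and both coefficients are
nonnegative because `0 ≤ a < b`. -/

noncomputable def causalCorr (u v : ℝ → ℝ) (τ : ℝ) : ℝ :=
  ∫ t in Ici (0:ℝ), u (t + τ) * v t

lemma causalCorr_zero (u v : ℝ → ℝ) : causalCorr u v 0 = ∫ t in Ici (0:ℝ), u t * v t := by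
  simp only [causalCorr, add_zero]

lemma absSlopeIneq_iff_causalCorr (a b : ℝ) (Δ : (ℝ → ℝ) → (ℝ → ℝ)) :
    AbsSlopeIneq a b Δ ↔ ∀ (τ : ℝ) (x : ℝ → ℝ), IsSignal x →
      |causalCorr (fun t => x t - b⁻¹ * Δ x t) (fun t => -a * x t + Δ x t) τ|
        ≤ causalCorr (fun t => x t - b⁻¹ * Δ x t) (fun t => -a * x t + Δ x t) 0 := by
  simp only [AbsSlopeIneq, causalCorr_zero]
  rfl

lemma integrableOn_comp_add_right_mul {u v : ℝ → ℝ} (hu : MemLp u 2 volume)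
    (hv : MemLp v 2 volume) (τ : ℝ) (s : Set ℝ) :
    IntegrableOn (fun t => u (t + τ) * v t) s :=
  ((hu.comp_measurePreserving (measurePreserving_add_right volume τ)).integrable_mul
    hv).integrableOn

lemma causalCorr_add_mul_left_mul_right {u v : ℝ → ℝ} (hu : MemLp u 2 volume)
    (hv : MemLp v 2 volume) (c θ τ : ℝ) :
    causalCorr (fun t => u t + c * v t) (fun t => θ * v t) τ
      = θ * (causalCorr u v τ + c * causalCorr v v τ) := by
  have hexpand : (fun t => (u (t + τ) + c * v (t + τ)) * (θ * v t))
      = fun t => θ * (u (t + τ) * v t) + θ * c * (v (t + τ) * v t) := by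
    funext t; ring
  rw [causalCorr, hexpand, integral_add
      ((integrableOn_comp_add_right_mul hu hv τ _).const_mul _)
      ((integrableOn_comp_add_right_mul hv hv τ _).const_mul _),
    integral_const_mul, integral_const_mul, causalCorr, causalCorr, mul_add, mul_assoc]

lemma setIntegral_Ici_comp_add_right_le {g : ℝ → ℝ} (hg : Integrable g)
    (hg_nonneg : ∀ t, 0 ≤ g t) (hg_causal : ∀ t < (0:ℝ), g t = 0) (τ : ℝ) :
    ∫ t in Ici (0:ℝ), g (t + τ) ≤ ∫ t in Ici (0:ℝ), g t :=
  calc ∫ t in Ici (0:ℝ), g (t + τ)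
      ≤ ∫ t, g (t + τ) :=
        setIntegral_le_integral (hg.comp_add_right τ) (ae_of_all _ fun _ => hg_nonneg _)
    _ = ∫ t, g t := integral_add_right_eq_self g τ
    _ = ∫ t in Ici (0:ℝ), g t :=
        (setIntegral_eq_integral_of_forall_compl_eq_zero fun t ht =>
          hg_causal t (not_le.mp ht)).symm

lemma abs_mul_le_add_mul_self_div_two (p q : ℝ) : |p * q| ≤ (p * p + q * q) / 2 := by
  have := two_mul_le_add_sq |p| |q|
  rw [abs_mul]
  nlinarith [sq_abs p, sq_abs q]

lemma abs_causalCorr_self_le {v : ℝ → ℝ} (hv : MemLp v 2 volume)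
    (hv_causal : ∀ t < (0:ℝ), v t = 0) (τ : ℝ) :
    |causalCorr v v τ| ≤ causalCorr v v 0 := by
  have hsq : Integrable (fun t => v t * v t) := hv.integrable_mul hv
  have hsq_shift : Integrable (fun t => v (t + τ) * v (t + τ)) := hsq.comp_add_right τ
  have hshift_le := setIntegral_Ici_comp_add_right_le hsq (fun t => mul_self_nonneg (v t))
    (fun t ht => by rw [hv_causal t ht, mul_zero]) τ
  rw [causalCorr_zero]
  calc |causalCorr v v τ|
      ≤ ∫ t in Ici (0:ℝ), |v (t + τ) * v t| := abs_integral_le_integral_abs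
    _ ≤ ∫ t in Ici (0:ℝ), (v (t + τ) * v (t + τ) + v t * v t) / 2 :=
        integral_mono (integrableOn_comp_add_right_mul hv hv τ _).abs
          ((hsq_shift.integrableOn.add hsq.integrableOn).div_const 2)
          fun t => abs_mul_le_add_mul_self_div_two _ _
    _ = ((∫ t in Ici (0:ℝ), v (t + τ) * v (t + τ)) + ∫ t in Ici (0:ℝ), v t * v t) / 2 := by
        rw [integral_div, integral_add hsq_shift.integrableOn hsq.integrableOn]
    _ ≤ ∫ t in Ici (0:ℝ), v t * v t := by linarith

theorem abs_slope_ineq_homotopy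
    (a b : ℝ) (ha : 0 ≤ a) (hab : a < b)
    (Δ : (ℝ → ℝ) → (ℝ → ℝ))
    (hΔ : ∀ x, IsSignal x → IsSignal (Δ x))
    (hslope : AbsSlopeIneq a b Δ) :
    ∀ θ : ℝ, θ ∈ Icc (0:ℝ) 1 →
      AbsSlopeIneq a b (fun x => fun t => θ * Δ x t + (1 - θ) * a * x t) := by
  rintro θ ⟨hθ0, hθ1⟩
  rw [absSlopeIneq_iff_causalCorr] at hslope ⊢
  intro τ x hx
  obtain ⟨hy, hy_causal⟩ := hΔ x hx
  set u : ℝ → ℝ := fun t => x t - b⁻¹ * Δ x t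
  set v : ℝ → ℝ := fun t => -a * x t + Δ x t
  have hu : MemLp u 2 volume := hx.1.sub (hy.const_mul _)
  have hv : MemLp v 2 volume := (hx.1.const_mul (-a)).add hy
  have hv_causal : ∀ t < (0:ℝ), v t = 0 := fun t ht => by simp [v, hx.2 t ht, hy_causal t ht]
  have hc : 0 ≤ (1 - θ) * b⁻¹ := mul_nonneg (by linarith) (inv_nonneg.mpr (by linarith))
  have hsplit : ∀ σ, causalCorr (fun t => x t - b⁻¹ * (θ * Δ x t + (1 - θ) * a * x t))
      (fun t => -a * x t + (θ * Δ x t + (1 - θ) * a * x t)) σ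
      = θ * (causalCorr u v σ + (1 - θ) * b⁻¹ * causalCorr v v σ) := fun σ => by
    rw [← causalCorr_add_mul_left_mul_right hu hv]
    congr 1 <;> funext t <;> simp only [u, v] <;> ring
  rw [hsplit, hsplit, abs_mul, abs_of_nonneg hθ0]
  gcongr
  calc |causalCorr u v τ + (1 - θ) * b⁻¹ * causalCorr v v τ|
      ≤ |causalCorr u v τ| + (1 - θ) * b⁻¹ * |causalCorr v v τ| :=
        (abs_add_le _ _).trans_eq (by rw [abs_mul, abs_of_nonneg hc])
    _ ≤ causalCorr u v 0 + (1 - θ) * b⁻¹ * causalCorr v v 0 := by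
        gcongr
        · exact hslope τ x hx
        · exact abs_causalCorr_self_le hv hv_causal τ
end
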